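/- arXiv:2502.10132 — 7 statements merged into one kernel-verified Lean document; each statement's English description precedes it below -/
import Mathlib

section
/- For real α ≥ 0 with α irrational and 0 < ρ < 1, the lower mechanical word s_{α,ρ} satisfies s_{α,0} < s_{α,ρ} in lexicographic order. -/
lemma exists_fract_gt (α : ℝ) (hirr : Irrational α) (ρ : ℝ) (hρ : 0 < ρ) (hρ1 : ρ < 1) :
    ∃ N : ℕ, 0 < N ∧ 1 - ρ < Int.fract (α * N) := by
  set S : AddSubgroup ℝ :=
    { carrier := {x | ∃ k m : ℤ, x = k + m * α}
      zero_mem' := ⟨0, 0, by simp⟩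
      add_mem' := by
        rintro x y ⟨k1, m1, rfl⟩ ⟨k2, m2, rfl⟩
        exact ⟨k1 + k2, m1 + m2, by push_cast; ring⟩
      neg_mem' := by
        rintro x ⟨k, m, rfl⟩
        exact ⟨-k, -m, by push_cast; ring⟩ } with hS
  rcases S.dense_or_cyclic with hD | ⟨a, ha⟩
  · obtain ⟨g, hgS, hg⟩ := hD.exists_mem_open isOpen_Ioo (⟨ρ/2, by constructor <;> linarith⟩ :
      (Set.Ioo (0:ℝ) ρ).Nonempty)
    obtain ⟨k, m, rfl⟩ := hgS
    obtain ⟨hg0, hgρ⟩ := hg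
    have hm : m ≠ 0 := by
      rintro rfl
      simp only [Int.cast_zero, zero_mul, add_zero] at hg0 hgρ
      have h1 : (0:ℤ) < k := by exact_mod_cast hg0
      have h2 : (k:ℝ) < 1 := by linarith
      have h2' : k < 1 := by exact_mod_cast h2
      omega
    set g : ℝ := k + m * α with hgdef
    have hg1 : g < 1 := lt_trans hgρ hρ1
    rcases lt_or_gt_of_ne hm with hmneg | hmpos
    · refine ⟨(-m).toNat, by omega, ?_⟩
      have hcast : ((((-m).toNat : ℕ)) : ℝ) = -(m:ℝ) := by
        rw [show (((-m).toNat : ℕ) : ℝ) = (((-m).toNat : ℤ) : ℝ) by push_cast; ring,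
          Int.toNat_of_nonneg (by omega : (0:ℤ) ≤ -m)]; push_cast; ring
      have : α * ((-m).toNat : ℝ) = (k : ℝ) + -g := by rw [hcast, hgdef]; ring
      rw [this, Int.fract_intCast_add, Int.fract_neg, Int.fract_eq_self.2 ⟨le_of_lt hg0, hg1⟩]
      · linarith
      · rw [Int.fract_eq_self.2 ⟨le_of_lt hg0, hg1⟩]; exact ne_of_gt hg0
    · -- m > 0
      have hex : ∃ j : ℕ, 1 - ρ < j * g := by
        obtain ⟨j, hj⟩ := exists_nat_gt ((1 - ρ) / g)
        exact ⟨j, by rw [div_lt_iff₀ hg0] at hj; linarith⟩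
      set j := Nat.find hex with hj
      have hjspec : 1 - ρ < j * g := Nat.find_spec hex
      have hj0 : j ≠ 0 := by
        intro h
        rw [h] at hjspec; simp at hjspec; linarith
      have hjm : ¬ (1 - ρ < (j - 1 : ℕ) * g) := Nat.find_min hex (by omega)
      push_neg at hjm
      have hcast2 : ((j - 1 : ℕ) : ℝ) = (j : ℝ) - 1 := by
        push_cast [Nat.cast_sub (by omega : 1 ≤ j)]; ring
      have hjg1 : (j : ℝ) * g < 1 := by
        rw [hcast2] at hjm; nlinarith
      refine ⟨j * m.toNat, Nat.mul_pos (by omega) (by omega), ?_⟩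
      have hmt : ((m.toNat : ℕ) : ℝ) = (m : ℝ) := by
        rw [show ((m.toNat : ℕ) : ℝ) = ((m.toNat : ℤ) : ℝ) by push_cast; ring,
          Int.toNat_of_nonneg (by omega : (0:ℤ) ≤ m)]
      have hcast3 : ((j * m.toNat : ℕ) : ℝ) = (j : ℝ) * (m : ℝ) := by
        push_cast [hmt]; ring
      have : α * ((j * m.toNat : ℕ) : ℝ) = (j : ℝ) * g - ((j : ℤ) * k : ℤ) := by
        rw [hcast3, hgdef]; push_cast; ring
      rw [this, Int.fract_sub_intCast, Int.fract_eq_self.2 ⟨by positivity, hjg1⟩]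
      exact hjspec
  · exfalso
    have h1 : (1:ℝ) ∈ S := ⟨1, 0, by simp⟩
    have h2 : α ∈ S := ⟨0, 1, by simp⟩
    rw [ha, AddSubgroup.mem_closure_singleton] at h1 h2
    obtain ⟨n, hn⟩ := h1
    obtain ⟨m, hm⟩ := h2
    have hn0 : n ≠ 0 := by rintro rfl; simp at hn
    have key : (n : ℝ) * α = m := by
      have h : n • α = m • (1:ℝ) := by rw [← hm, ← hn]; exact smul_comm n m a
      rw [zsmul_eq_mul, zsmul_eq_mul, mul_one] at h
      exact h
    exact hirr ⟨(m : ℚ) / n, by push_cast; field_simp at key ⊢; linarith [key]⟩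

/-- Lower mechanical word with slope α and intercept ρ. -/
noncomputable def lowerMech (α ρ : ℝ) (n : ℕ) : ℤ := ⌊α * (n + 1) + ρ⌋ - ⌊α * n + ρ⌋

/-- Strict lexicographic order on integer sequences. -/
def LexLt (f g : ℕ → ℤ) : Prop := ∃ n, (∀ k < n, f k = g k) ∧ f n < g n

theorem lower_mech_zero_lt (α ρ : ℝ) (hα : 0 ≤ α) (hirr : Irrational α)
    (hρ : 0 < ρ) (hρ1 : ρ < 1) :
    LexLt (lowerMech α 0) (lowerMech α ρ) := by
  set D : ℝ → ℤ := fun x => ⌊x + ρ⌋ - ⌊x⌋ with hD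
  have hD01 : ∀ x : ℝ, D x = 0 ∨ D x = 1 := by
    intro x
    have h1 : ⌊x⌋ ≤ ⌊x + ρ⌋ := Int.floor_le_floor (by linarith)
    have h2 : ⌊x + ρ⌋ ≤ ⌊x⌋ + 1 := by
      rw [show ⌊x⌋ + 1 = ⌊x + (1:ℤ)⌋ by rw [Int.floor_add_intCast], Int.cast_one]
      exact Int.floor_le_floor (by linarith)
    simp only [hD]; omega
  have hDone : ∀ x : ℝ, 1 - ρ < Int.fract x → D x = 1 := by
    intro x hx
    have hx1 : Int.fract x < 1 := Int.fract_lt_one x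
    have hrepr : x + ρ = (⌊x⌋ : ℝ) + (Int.fract x + ρ) := by
      rw [Int.fract]; ring
    have : ⌊x + ρ⌋ = ⌊x⌋ + 1 := by
      rw [hrepr, Int.floor_intCast_add]
      congr 1
      rw [Int.floor_eq_iff]
      constructor <;> push_cast <;> linarith
    simp only [hD]; omega
  have key : ∀ k : ℕ, lowerMech α ρ k - lowerMech α 0 k
      = D (α * ((k:ℝ) + 1)) - D (α * (k:ℝ)) := by
    intro k; simp only [lowerMech, hD, add_zero]; ring
  obtain ⟨N, hN0, hNf⟩ := exists_fract_gt α hirr ρ hρ hρ1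
  have hex : ∃ j : ℕ, D (α * ((j:ℝ) + 1)) ≠ 0 := by
    refine ⟨N - 1, ?_⟩
    have hc : ((N - 1 : ℕ) : ℝ) + 1 = (N : ℝ) := by
      push_cast [Nat.cast_sub (by omega : 1 ≤ N)]; ring
    rw [hc]
    have := hDone (α * N) hNf
    omega
  set n := Nat.find hex with hn
  have hspec : D (α * ((n:ℝ) + 1)) ≠ 0 := Nat.find_spec hex
  have hDn1 : D (α * ((n:ℝ) + 1)) = 1 := by rcases hD01 (α * ((n:ℝ) + 1)) with h | h <;> omega
  have hDk : ∀ k : ℕ, k ≤ n → D (α * (k:ℝ)) = 0 := by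
    intro k hk
    match k with
    | 0 =>
      have hz : ⌊ρ⌋ = 0 := Int.floor_eq_zero_iff.2 ⟨hρ.le, hρ1⟩
      simp only [hD, Nat.cast_zero, mul_zero, zero_add, Int.floor_zero, hz, sub_zero]
    | j + 1 =>
      have hmin := Nat.find_min hex (show j < n by omega)
      push_neg at hmin
      rw [show ((j + 1 : ℕ) : ℝ) = (j : ℝ) + 1 by push_cast; ring]
      exact hmin
  refine ⟨n, ?_, ?_⟩
  · intro k hk
    have h1 := hDk k (by omega)
    have h2 := hDk (k + 1) (by omega)
    rw [show ((k + 1 : ℕ) : ℝ) = (k : ℝ) + 1 by push_cast; ring] at h2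
    have := key k
    omega
  · have h1 := hDk n le_rfl
    have := key n
    omega
end

section
/- Let w be a binary word over {a,b} that is unbalanced (there exist equal-length factors u, v with ||u|_b - |v|_b| ≥ 2). Then there exists a palindrome z such that both aza and bzb are factors of w. -/
/-- `u` is a (finite) factor of the infinite word `w`. -/
def InfFactor {A : Type*} (u : List A) (w : ℕ → A) : Prop :=
  ∃ i, u = List.ofFn (fun k : Fin u.length => w (i + (k : ℕ)))

private def pcnt {A : Type*} [DecidableEq A] (b : A) (w : ℕ → A) (k : ℕ) : ℕ :=
  if w k = b then 1 else 0

private def pS {A : Type*} [DecidableEq A] (b : A) (w : ℕ → A) (i n : ℕ) : ℕ :=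
  ∑ k ∈ Finset.range n, pcnt b w (i + k)

private lemma pcnt_le_one {A : Type*} [DecidableEq A] (b : A) (w : ℕ → A) (k : ℕ) :
    pcnt b w k ≤ 1 := by
  unfold pcnt; split <;> omega

private lemma pS_succ' {A : Type*} [DecidableEq A] (b : A) (w : ℕ → A) (i n : ℕ) :
    pS b w i (n + 1) = pcnt b w i + pS b w (i + 1) n := by
  unfold pS
  rw [Finset.sum_range_succ', add_comm]
  congr 1
  · exact Finset.sum_congr rfl fun k _ => by rw [show i + (k + 1) = i + 1 + k by omega]

private lemma pS_add {A : Type*} [DecidableEq A] (b : A) (w : ℕ → A) (i p q : ℕ) :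
    pS b w i (p + q) = pS b w i p + pS b w (i + p) q := by
  induction q with
  | zero => simp [pS]
  | succ q ih =>
    have h1 : pS b w i (p + q + 1) = pS b w i (p + q) + pcnt b w (i + (p + q)) :=
      Finset.sum_range_succ _ _
    have h2 : pS b w (i + p) (q + 1) = pS b w (i + p) q + pcnt b w (i + p + q) :=
      Finset.sum_range_succ _ _
    rw [show p + (q + 1) = p + q + 1 by omega, h1, ih, h2, show i + (p + q) = i + p + q by omega]
    omega

private lemma pS_split {A : Type*} [DecidableEq A] (b : A) (w : ℕ → A) (i n p q : ℕ)
    (h : n = p + q) : pS b w i n = pS b w i p + pS b w (i + p) q := by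
  subst h; exact pS_add b w i p q

private lemma pS_one {A : Type*} [DecidableEq A] (b : A) (w : ℕ → A) (i : ℕ) :
    pS b w i 1 = pcnt b w i := by
  simp [pS]

private lemma pS_le {A : Type*} [DecidableEq A] (b : A) (w : ℕ → A) (i n : ℕ) :
    pS b w i n ≤ n := by
  calc pS b w i n ≤ ∑ _k ∈ Finset.range n, 1 :=
        Finset.sum_le_sum fun k _ => pcnt_le_one b w (i + k)
    _ = n := by simp

private lemma pS_congr {A : Type*} [DecidableEq A] (b : A) (w : ℕ → A) {p q n : ℕ}
    (h : ∀ t, t < n → pcnt b w (p + t) = pcnt b w (q + t)) : pS b w p n = pS b w q n :=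
  Finset.sum_congr rfl fun t ht => h t (Finset.mem_range.mp ht)

private lemma count_window {A : Type*} [DecidableEq A] (b : A) (w : ℕ → A) :
    ∀ (n i : ℕ), (List.ofFn (fun k : Fin n => w (i + (k : ℕ)))).count b = pS b w i n := by
  intro n
  induction n with
  | zero => intro i; simp [pS]
  | succ n ih =>
    intro i
    rw [List.ofFn_succ]
    have h1 : (fun k : Fin n => w (i + ((k.succ : Fin (n + 1)) : ℕ)))
        = fun k : Fin n => w (i + 1 + (k : ℕ)) := by
      funext k
      congr 1
      simp only [Fin.val_succ]
      omega
    simp only [List.count_cons, h1, ih (i + 1), Fin.val_zero, add_zero, beq_iff_eq]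
    rw [pS_succ']
    unfold pcnt
    split <;> omega

private lemma infFactor_of_eq {A : Type*} (w : ℕ → A) (u : List A) (i n : ℕ)
    (hn : u.length = n) (h : u = List.ofFn (fun k : Fin n => w (i + (k : ℕ)))) :
    InfFactor u w := by
  subst hn
  exact ⟨i, h⟩

theorem unbalanced_implies_palindrome_pattern {A : Type*} [DecidableEq A]
    (a b : A) (hab : a ≠ b) (w : ℕ → A) (hw : ∀ n, w n = a ∨ w n = b)
    (hunb : ∃ u v : List A, InfFactor u w ∧ InfFactor v w ∧ u.length = v.length ∧
      2 ≤ |(u.count b : ℤ) - (v.count b : ℤ)|) :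
    ∃ z : List A, z.reverse = z ∧
      InfFactor (a :: (z ++ [a])) w ∧ InfFactor (b :: (z ++ [b])) w := by
  classical
  have hcb : ∀ x, pcnt b w x = 1 → w x = b := by
    intro x hx; by_contra h; simp [pcnt, h] at hx
  have hca : ∀ x, pcnt b w x = 0 → w x = a := by
    intro x hx
    rcases hw x with h | h
    · exact h
    · simp [pcnt, h] at hx
  have hpw : ∀ x y, pcnt b w x = pcnt b w y → w x = w y := by
    intro x y h
    have h1 := pcnt_le_one b w x
    have h2 := pcnt_le_one b w y
    rcases (by omega : pcnt b w x = 0 ∧ pcnt b w y = 0 ∨ pcnt b w x = 1 ∧ pcnt b w y = 1) with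
      ⟨ha1, ha2⟩ | ⟨ha1, ha2⟩
    · rw [hca x ha1, hca y ha2]
    · rw [hcb x ha1, hcb y ha2]
  obtain ⟨u, v, hu, hv, hlen, hcnt⟩ := hunb
  obtain ⟨iu, hiu⟩ := hu
  obtain ⟨iv, hiv⟩ := hv
  have hu' : u.count b = pS b w iu u.length := by
    have h := count_window b w u.length iu
    rw [← hiu] at h
    exact h
  have hv'' : pS b w iv u.length = v.count b := by
    have h := count_window b w v.length iv
    rw [← hiv] at h
    rw [hlen]
    exact h.symm
  have hex : ∃ n, ∃ p q : ℕ, pS b w q n + 2 ≤ pS b w p n := by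
    rcases le_abs.mp hcnt with h | h
    · exact ⟨u.length, iu, iv, by omega⟩
    · exact ⟨u.length, iv, iu, by omega⟩
  obtain ⟨n, hPn, hmin⟩ : ∃ n, (∃ p q, pS b w q n + 2 ≤ pS b w p n) ∧
      ∀ m', m' < n → ∀ p q, pS b w p m' < pS b w q m' + 2 := by
    refine ⟨Nat.find hex, Nat.find_spec hex, ?_⟩
    intro m' hm' p q
    by_contra h
    exact Nat.find_min hex hm' ⟨p, q, by omega⟩
  obtain ⟨i, j, hij⟩ := hPn
  have hn2 : 2 ≤ n := by
    have h1 := pS_le b w i n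
    omega
  obtain ⟨m, rfl⟩ : ∃ m, n = m + 2 := ⟨n - 2, by omega⟩
  -- decompositions of the two full windows
  have d1 : pS b w i (m+2) = pcnt b w i + pS b w (i+1) (m+1) := by
    rw [pS_split b w i (m+2) 1 (m+1) (by omega), pS_one]
  have d2 : pS b w j (m+2) = pcnt b w j + pS b w (j+1) (m+1) := by
    rw [pS_split b w j (m+2) 1 (m+1) (by omega), pS_one]
  have d3 : pS b w (i+1) (m+1) = pS b w (i+1) m + pcnt b w (i+1+m) := by
    rw [pS_split b w (i+1) (m+1) m 1 (by omega), pS_one]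
  have d4 : pS b w (j+1) (m+1) = pS b w (j+1) m + pcnt b w (j+1+m) := by
    rw [pS_split b w (j+1) (m+1) m 1 (by omega), pS_one]
  have d5 : pS b w i (m+2) = pS b w i (m+1) + pcnt b w (i+(m+1)) := by
    rw [pS_split b w i (m+2) (m+1) 1 (by omega), pS_one]
  have d6 : pS b w j (m+2) = pS b w j (m+1) + pcnt b w (j+(m+1)) := by
    rw [pS_split b w j (m+2) (m+1) 1 (by omega), pS_one]
  have b1 := pcnt_le_one b w i
  have b2 := pcnt_le_one b w j
  have b3 := pcnt_le_one b w (i+(m+1))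
  have b4 := pcnt_le_one b w (j+(m+1))
  have hm1 := hmin (m+1) (by omega) (i+1) (j+1)
  have hm2 := hmin (m+1) (by omega) i j
  have c1 : pcnt b w i = 1 := by omega
  have c2 : pcnt b w j = 0 := by omega
  have c3 : pcnt b w (i+(m+1)) = 1 := by omega
  have c4 : pcnt b w (j+(m+1)) = 0 := by omega
  have heq : pS b w i (m+2) = pS b w j (m+2) + 2 := by omega
  have hmid : pS b w (i+1) m = pS b w (j+1) m := by
    have e3 : pcnt b w (i+1+m) = 1 := by
      rw [show i+1+m = i+(m+1) by omega]; exact c3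
    have e4 : pcnt b w (j+1+m) = 0 := by
      rw [show j+1+m = j+(m+1) by omega]; exact c4
    omega
  -- middles are equal letter by letter
  have Hmid : ∀ k, k < m → pcnt b w (i+1+k) = pcnt b w (j+1+k) := by
    by_contra hcon
    push_neg at hcon
    obtain ⟨k₁, hk₁, hne₁⟩ := hcon
    have hbad : ∃ k, k < m ∧ pcnt b w (i+1+k) ≠ pcnt b w (j+1+k) := ⟨k₁, hk₁, hne₁⟩
    obtain ⟨i0, ⟨hi0m, hi0ne⟩, hi0min'⟩ : ∃ i0,
        (i0 < m ∧ pcnt b w (i+1+i0) ≠ pcnt b w (j+1+i0)) ∧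
        ∀ k, k < i0 → ¬(k < m ∧ pcnt b w (i+1+k) ≠ pcnt b w (j+1+k)) :=
      ⟨Nat.find hbad, Nat.find_spec hbad, fun k hk => Nat.find_min hbad hk⟩
    have hi0min : ∀ k, k < i0 → pcnt b w (i+1+k) = pcnt b w (j+1+k) := by
      intro k hk
      have h := hi0min' k hk
      push_neg at h
      exact h (by omega)
    have hbadR : ∃ t, t < m ∧ pcnt b w (i+1+(m-1-t)) ≠ pcnt b w (j+1+(m-1-t)) := by
      refine ⟨m-1-i0, by omega, ?_⟩
      rw [show m-1-(m-1-i0) = i0 by omega]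
      exact hi0ne
    obtain ⟨t0, ⟨ht0m, ht0ne⟩, ht0min'⟩ : ∃ t0,
        (t0 < m ∧ pcnt b w (i+1+(m-1-t0)) ≠ pcnt b w (j+1+(m-1-t0))) ∧
        ∀ t, t < t0 → ¬(t < m ∧ pcnt b w (i+1+(m-1-t)) ≠ pcnt b w (j+1+(m-1-t))) :=
      ⟨Nat.find hbadR, Nat.find_spec hbadR, fun t ht => Nat.find_min hbadR ht⟩
    obtain ⟨j0, hj0⟩ : ∃ j0, j0 = m-1-t0 := ⟨m-1-t0, rfl⟩
    rw [← hj0] at ht0ne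
    have hj0m : j0 < m := by omega
    have hj0max : ∀ k, j0 < k → k < m → pcnt b w (i+1+k) = pcnt b w (j+1+k) := by
      intro k hk1 hk2
      have h := ht0min' (m-1-k) (by omega)
      push_neg at h
      have h2 := h (by omega)
      rwa [show m-1-(m-1-k) = k by omega] at h2
    have hi0j0 : i0 ≤ j0 := by
      by_contra h
      exact hi0min' j0 (by omega) ⟨hj0m, ht0ne⟩
    have hpre : pS b w (i+1) i0 = pS b w (j+1) i0 :=
      pS_congr b w (fun t ht => hi0min t ht)
    have bi0 := pcnt_le_one b w (i+1+i0)
    have bj0' := pcnt_le_one b w (j+1+i0)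
    rcases (by omega : (pcnt b w (i+1+i0) = 1 ∧ pcnt b w (j+1+i0) = 0) ∨
        (pcnt b w (i+1+i0) = 0 ∧ pcnt b w (j+1+i0) = 1)) with ⟨e1, e2⟩ | ⟨e1, e2⟩
    · -- prefix windows give contradiction
      have W1 : pS b w i (i0+2) = pcnt b w i + (pS b w (i+1) i0 + pcnt b w (i+1+i0)) := by
        rw [pS_split b w i (i0+2) 1 (i0+1) (by omega),
            pS_split b w (i+1) (i0+1) i0 1 (by omega), pS_one, pS_one]
      have W2 : pS b w j (i0+2) = pcnt b w j + (pS b w (j+1) i0 + pcnt b w (j+1+i0)) := by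
        rw [pS_split b w j (i0+2) 1 (i0+1) (by omega),
            pS_split b w (j+1) (i0+1) i0 1 (by omega), pS_one, pS_one]
      have hmk := hmin (i0+2) (by omega) i j
      omega
    · rcases eq_or_lt_of_le hi0j0 with hEq | hLt
      · -- i0 = j0 : the totals cannot be equal
        obtain ⟨s, hs⟩ : ∃ s, m = i0 + 1 + s := ⟨m-1-i0, by omega⟩
        have hsuf : pS b w (i+1+i0+1) s = pS b w (j+1+i0+1) s := by
          refine pS_congr b w (fun t ht => ?_)
          rw [show i+1+i0+1+t = i+1+(i0+1+t) by omega,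
              show j+1+i0+1+t = j+1+(i0+1+t) by omega]
          exact hj0max (i0+1+t) (by omega) (by omega)
        have W1 : pS b w (i+1) m = pS b w (i+1) i0 + (pcnt b w (i+1+i0) + pS b w (i+1+i0+1) s) := by
          rw [pS_split b w (i+1) m i0 (1+s) (by omega),
              pS_split b w (i+1+i0) (1+s) 1 s (by omega), pS_one]
        have W2 : pS b w (j+1) m = pS b w (j+1) i0 + (pcnt b w (j+1+i0) + pS b w (j+1+i0+1) s) := by
          rw [pS_split b w (j+1) m i0 (1+s) (by omega),
              pS_split b w (j+1+i0) (1+s) 1 s (by omega), pS_one]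
        omega
      · have bi1 := pcnt_le_one b w (i+1+j0)
        have bj1 := pcnt_le_one b w (j+1+j0)
        rcases (by omega : (pcnt b w (i+1+j0) = 1 ∧ pcnt b w (j+1+j0) = 0) ∨
            (pcnt b w (i+1+j0) = 0 ∧ pcnt b w (j+1+j0) = 1)) with ⟨f1, f2⟩ | ⟨f1, f2⟩
        · -- suffix windows give contradiction
          obtain ⟨s, hs⟩ : ∃ s, m = j0 + 1 + s := ⟨m-1-j0, by omega⟩
          have hsuf : pS b w (i+1+j0+1) s = pS b w (j+1+j0+1) s := by
            refine pS_congr b w (fun t ht => ?_)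
            rw [show i+1+j0+1+t = i+1+(j0+1+t) by omega,
                show j+1+j0+1+t = j+1+(j0+1+t) by omega]
            exact hj0max (j0+1+t) (by omega) (by omega)
          have W1 : pS b w (i+1+j0) (s+2) =
              pcnt b w (i+1+j0) + (pS b w (i+1+j0+1) s + pcnt b w (i+1+j0+1+s)) := by
            rw [pS_split b w (i+1+j0) (s+2) 1 (s+1) (by omega),
                pS_split b w (i+1+j0+1) (s+1) s 1 (by omega), pS_one, pS_one]
          have W2 : pS b w (j+1+j0) (s+2) =
              pcnt b w (j+1+j0) + (pS b w (j+1+j0+1) s + pcnt b w (j+1+j0+1+s)) := by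
            rw [pS_split b w (j+1+j0) (s+2) 1 (s+1) (by omega),
                pS_split b w (j+1+j0+1) (s+1) s 1 (by omega), pS_one, pS_one]
          have g1 : pcnt b w (i+1+j0+1+s) = 1 := by
            rw [show i+1+j0+1+s = i+(m+1) by omega]; exact c3
          have g2 : pcnt b w (j+1+j0+1+s) = 0 := by
            rw [show j+1+j0+1+s = j+(m+1) by omega]; exact c4
          have hmk := hmin (s+2) (by omega) (i+1+j0) (j+1+j0)
          omega
        · -- middle windows give contradiction
          obtain ⟨d, hd⟩ : ∃ d, j0 = i0 + 1 + d := ⟨j0-i0-1, by omega⟩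
          obtain ⟨s, hs⟩ : ∃ s, m = j0 + 1 + s := ⟨m-1-j0, by omega⟩
          have hsuf : pS b w (i+1+i0+1+d+1) s = pS b w (j+1+i0+1+d+1) s := by
            refine pS_congr b w (fun t ht => ?_)
            rw [show i+1+i0+1+d+1+t = i+1+(j0+1+t) by omega,
                show j+1+i0+1+d+1+t = j+1+(j0+1+t) by omega]
            exact hj0max (j0+1+t) (by omega) (by omega)
          have W1 : pS b w (i+1) m = pS b w (i+1) i0 + (pcnt b w (i+1+i0) +
              (pS b w (i+1+i0+1) d + (pcnt b w (i+1+i0+1+d) + pS b w (i+1+i0+1+d+1) s))) := by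
            rw [pS_split b w (i+1) m i0 (1+(d+(1+s))) (by omega),
                pS_split b w (i+1+i0) (1+(d+(1+s))) 1 (d+(1+s)) (by omega),
                pS_split b w (i+1+i0+1) (d+(1+s)) d (1+s) (by omega),
                pS_split b w (i+1+i0+1+d) (1+s) 1 s (by omega), pS_one, pS_one]
          have W2 : pS b w (j+1) m = pS b w (j+1) i0 + (pcnt b w (j+1+i0) +
              (pS b w (j+1+i0+1) d + (pcnt b w (j+1+i0+1+d) + pS b w (j+1+i0+1+d+1) s))) := by
            rw [pS_split b w (j+1) m i0 (1+(d+(1+s))) (by omega),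
                pS_split b w (j+1+i0) (1+(d+(1+s))) 1 (d+(1+s)) (by omega),
                pS_split b w (j+1+i0+1) (d+(1+s)) d (1+s) (by omega),
                pS_split b w (j+1+i0+1+d) (1+s) 1 s (by omega), pS_one, pS_one]
          have g1 : pcnt b w (i+1+i0+1+d) = 0 := by
            rw [show i+1+i0+1+d = i+1+j0 by omega]; exact f1
          have g2 : pcnt b w (j+1+i0+1+d) = 1 := by
            rw [show j+1+i0+1+d = j+1+j0 by omega]; exact f2
          have hmk := hmin d (by omega) (i+1+i0+1) (j+1+i0+1)
          omega
  have Hmidw : ∀ k, k < m → w (j+1+k) = w (i+1+k) := fun k hk => hpw _ _ (Hmid k hk).symm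
  -- the middle word is a palindrome
  have Hpal : ∀ k l, k + l + 1 = m → pcnt b w (i+1+k) = pcnt b w (i+1+l) := by
    by_contra hcon
    push_neg at hcon
    obtain ⟨k₁, l₁, hkl₁, hne₁⟩ := hcon
    have hbad : ∃ k, k + 1 ≤ m ∧ pcnt b w (i+1+k) ≠ pcnt b w (i+1+(m-1-k)) := by
      refine ⟨k₁, by omega, ?_⟩
      rw [show m-1-k₁ = l₁ by omega]
      exact hne₁
    obtain ⟨k0, ⟨hk0m, hk0ne⟩, hk0min⟩ : ∃ k0,
        (k0 + 1 ≤ m ∧ pcnt b w (i+1+k0) ≠ pcnt b w (i+1+(m-1-k0))) ∧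
        ∀ t, t < k0 → ¬(t + 1 ≤ m ∧ pcnt b w (i+1+t) ≠ pcnt b w (i+1+(m-1-t))) :=
      ⟨Nat.find hbad, Nat.find_spec hbad, fun t ht => Nat.find_min hbad ht⟩
    obtain ⟨l0, hl0⟩ : ∃ l0, m = k0 + l0 + 1 := ⟨m-1-k0, by omega⟩
    rw [show m-1-k0 = l0 by omega] at hk0ne
    have hmin_eq : ∀ t, t < k0 → pcnt b w (i+1+t) = pcnt b w (i+1+(m-1-t)) := by
      intro t ht
      have h := hk0min t ht
      push_neg at h
      exact h (by omega)
    have hk0l0 : k0 < l0 := by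
      rcases Nat.lt_trichotomy k0 l0 with h | h | h
      · exact h
      · exact absurd (by rw [h]) hk0ne
      · exfalso
        have h2 := hmin_eq l0 h
        rw [show m-1-l0 = k0 by omega] at h2
        exact hk0ne h2.symm
    have hQ : pS b w (i+1+l0+1) k0 = pS b w (i+1) k0 := by
      have h1 : pS b w (i+1+l0+1) k0 = ∑ t ∈ Finset.range k0, pcnt b w (i+1+(k0-1-t)) := by
        refine Finset.sum_congr rfl (fun t ht => ?_)
        have ht' : t < k0 := Finset.mem_range.mp ht
        have h2 := hmin_eq (k0-1-t) (by omega)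
        rw [show m-1-(k0-1-t) = l0+1+t by omega] at h2
        rw [show i+1+l0+1+t = i+1+(l0+1+t) by omega]
        exact h2.symm
      rw [h1]
      exact Finset.sum_range_reflect (fun t => pcnt b w (i+1+t)) k0
    have bk := pcnt_le_one b w (i+1+k0)
    have bl := pcnt_le_one b w (i+1+l0)
    rcases (by omega : (pcnt b w (i+1+k0) = 1 ∧ pcnt b w (i+1+l0) = 0) ∨
        (pcnt b w (i+1+k0) = 0 ∧ pcnt b w (i+1+l0) = 1)) with ⟨e1, e2⟩ | ⟨e1, e2⟩
    · -- prefix of the b-window vs suffix of the a-window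
      have W1 : pS b w i (k0+2) = pcnt b w i + (pS b w (i+1) k0 + pcnt b w (i+1+k0)) := by
        rw [pS_split b w i (k0+2) 1 (k0+1) (by omega),
            pS_split b w (i+1) (k0+1) k0 1 (by omega), pS_one, pS_one]
      have W2 : pS b w (j+1+l0) (k0+2) =
          pcnt b w (j+1+l0) + (pS b w (j+1+l0+1) k0 + pcnt b w (j+1+l0+1+k0)) := by
        rw [pS_split b w (j+1+l0) (k0+2) 1 (k0+1) (by omega),
            pS_split b w (j+1+l0+1) (k0+1) k0 1 (by omega), pS_one, pS_one]
      have g1 : pcnt b w (j+1+l0) = 0 := (Hmid l0 (by omega)).symm.trans e2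
      have g2 : pS b w (j+1+l0+1) k0 = pS b w (i+1) k0 := by
        have h3 : pS b w (j+1+l0+1) k0 = pS b w (i+1+l0+1) k0 := by
          refine pS_congr b w (fun t ht => ?_)
          rw [show j+1+l0+1+t = j+1+(l0+1+t) by omega,
              show i+1+l0+1+t = i+1+(l0+1+t) by omega]
          exact (Hmid (l0+1+t) (by omega)).symm
        rw [h3, hQ]
      have g3 : pcnt b w (j+1+l0+1+k0) = 0 := by
        rw [show j+1+l0+1+k0 = j+(m+1) by omega]; exact c4
      have hmk := hmin (k0+2) (by omega) i (j+1+l0)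
      omega
    · -- prefix of the a-window vs suffix of the b-window
      have W1 : pS b w j (k0+2) = pcnt b w j + (pS b w (j+1) k0 + pcnt b w (j+1+k0)) := by
        rw [pS_split b w j (k0+2) 1 (k0+1) (by omega),
            pS_split b w (j+1) (k0+1) k0 1 (by omega), pS_one, pS_one]
      have W2 : pS b w (i+1+l0) (k0+2) =
          pcnt b w (i+1+l0) + (pS b w (i+1+l0+1) k0 + pcnt b w (i+1+l0+1+k0)) := by
        rw [pS_split b w (i+1+l0) (k0+2) 1 (k0+1) (by omega),
            pS_split b w (i+1+l0+1) (k0+1) k0 1 (by omega), pS_one, pS_one]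
      have g1 : pS b w (j+1) k0 = pS b w (i+1) k0 :=
        pS_congr b w (fun t ht => (Hmid t (by omega)).symm)
      have g2 : pcnt b w (j+1+k0) = 0 := (Hmid k0 (by omega)).symm.trans e1
      have g3 : pcnt b w (i+1+l0+1+k0) = 1 := by
        rw [show i+1+l0+1+k0 = i+(m+1) by omega]; exact c3
      have hmk := hmin (k0+2) (by omega) (i+1+l0) j
      omega
  -- assemble the answer
  have Hpalw : ∀ k l, k + l + 1 = m → w (i+1+k) = w (i+1+l) :=
    fun k l hkl => hpw _ _ (Hpal k l hkl)
  refine ⟨List.ofFn (fun k : Fin m => w (i+1+(k : ℕ))), ?_, ?_, ?_⟩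
  · apply List.ext_getElem
    · simp
    · intro t h1 h2
      simp only [List.length_reverse, List.length_ofFn] at h1 h2
      rw [List.getElem_reverse]
      rw [List.getElem_ofFn, List.getElem_ofFn]
      simp only [List.length_ofFn]
      exact Hpalw _ _ (by omega)
  · refine infFactor_of_eq w _ j (m+2) (by simp) ?_
    rw [List.ofFn_succ, List.ofFn_succ']
    congr 1
    · rw [show ((0 : Fin (m+2)) : ℕ) = 0 from rfl, add_zero]
      exact (hca j c2).symm
    · rw [List.concat_eq_append]
      congr 1
      · refine congrArg List.ofFn (funext fun k => ?_)
        show w (i+1+(k : ℕ)) = w (j + ((k.castSucc.succ : Fin (m+2)) : ℕ))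
        rw [show ((k.castSucc.succ : Fin (m+2)) : ℕ) = (k : ℕ) + 1 by simp]
        rw [show j + ((k : ℕ) + 1) = j+1+(k : ℕ) by omega]
        exact (Hmidw k k.isLt).symm
      · show [a] = [w (j + (((Fin.last m).succ : Fin (m+2)) : ℕ))]
        rw [show (((Fin.last m).succ : Fin (m+2)) : ℕ) = m+1 by simp]
        rw [hca _ c4]
  · refine infFactor_of_eq w _ i (m+2) (by simp) ?_
    rw [List.ofFn_succ, List.ofFn_succ']
    congr 1
    · rw [show ((0 : Fin (m+2)) : ℕ) = 0 from rfl, add_zero]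
      exact (hcb i c1).symm
    · rw [List.concat_eq_append]
      congr 1
      · refine congrArg List.ofFn (funext fun k => ?_)
        show w (i+1+(k : ℕ)) = w (i + ((k.castSucc.succ : Fin (m+2)) : ℕ))
        rw [show ((k.castSucc.succ : Fin (m+2)) : ℕ) = (k : ℕ) + 1 by simp]
        rw [show i + ((k : ℕ) + 1) = i+1+(k : ℕ) by omega]
      · show [b] = [w (i + (((Fin.last m).succ : Fin (m+2)) : ℕ))]
        rw [show (((Fin.last m).succ : Fin (m+2)) : ℕ) = m+1 by simp]
        rw [hcb _ c3]
end

section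
/- Let w be a central word over {a,b} that is not a power of a single letter, and let p, q be the unique palindromes with w = p·a·b·q = q·b·a·p. Then the word w·a·b·q is a prefix of the infinite periodic word (q·b·a)^ω. -/
private lemma period_prefix {A : Type*} (t : List A) :
    ∀ (n : ℕ) (l : List A), l <+: t ++ l → l.length ≤ n * t.length →
      l <+: (List.replicate n t).flatten := by
  intro n
  induction n with
  | zero =>
    intro l _ hlen
    simp at hlen
    simp [hlen]
  | succ n ih =>
    intro l hper hlen
    by_cases h : l.length ≤ t.length
    · have hlt : l <+: t := by
        rw [List.prefix_iff_eq_take] at hper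
        rw [hper]
        have : (t ++ l).take l.length = t.take l.length := by
          rw [List.take_append]
          have : l.length - t.length = 0 := Nat.sub_eq_zero_of_le h
          simp [this]
        rw [this]
        exact List.take_prefix _ _
      calc l <+: t := hlt
        _ <+: (List.replicate (n+1) t).flatten := by
            rw [List.replicate_succ, List.flatten_cons]
            exact List.prefix_append _ _
    · push_neg at h
      have ht : t <+: l := by
        have h1 : t <+: t ++ l := List.prefix_append _ _
        exact List.prefix_of_prefix_length_le h1 hper (le_of_lt h)
      obtain ⟨l', rfl⟩ := ht
      have hper' : l' <+: t ++ l' := (List.prefix_append_right_inj t).mp hper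
      have hlen' : l'.length ≤ n * t.length := by
        simp [List.length_append, Nat.succ_mul] at hlen ⊢
        omega
      have := ih l' hper' hlen'
      rw [List.replicate_succ, List.flatten_cons]
      exact (List.prefix_append_right_inj t).mpr this

theorem central_word_prefix_of_periodic {A : Type*} (a b : A) (hab : a ≠ b)
    (w p q : List A) (hp : p.reverse = p) (hq : q.reverse = q)
    (h1 : w = p ++ [a, b] ++ q) (h2 : w = q ++ [b, a] ++ p) :
    ∃ n : ℕ, (w ++ [a, b] ++ q) <+: (List.replicate n (q ++ [b, a])).flatten := by
  obtain ⟨t, ht⟩ : ∃ t, t = q ++ [b, a] := ⟨_, rfl⟩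
  rw [← ht] at h2 ⊢
  have h2' : w = t ++ p := h2
  have htlen : 0 < t.length := by simp [ht]
  have hpw : p <+: t ++ p := by
    rw [← h2', h1]
    exact ⟨[a, b] ++ q, by simp⟩
  have hpref : p <+: (List.replicate p.length t).flatten :=
    period_prefix t p.length p hpw (Nat.le_mul_of_pos_right _ htlen)
  refine ⟨2 + p.length, ?_⟩
  have key : w ++ [a, b] ++ q = t ++ t ++ p := by
    calc w ++ [a, b] ++ q = t ++ (p ++ [a, b] ++ q) := by rw [h2']; simp
      _ = t ++ w := by rw [← h1]
      _ = t ++ t ++ p := by rw [h2']; simp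
  rw [key]
  rw [show 2 + p.length = 1 + (1 + p.length) by ring]
  rw [List.replicate_add, List.flatten_append, List.replicate_add, List.flatten_append]
  simp only [List.replicate_one, List.flatten_cons, List.flatten_nil, List.append_nil]
  rw [List.append_assoc]
  exact (List.prefix_append_right_inj t).mpr ((List.prefix_append_right_inj t).mpr hpref)
end

section
/- Let w be a central word over {a,b}, not a power of a single letter, with w = p·a·b·q = q·b·a·p for palindromes p, q. Then |p|+2 and |q|+2 are relatively prime periods of w. -/
/-- `k` is a period of the finite word `w`. -/
def ListPeriod {A : Type*} (k : ℕ) (w : List A) : Prop :=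
  ∀ i, i + k < w.length → w[i]? = w[i + k]?

lemma aux_lt (d M s : ℕ) (hd : 2 ≤ d) (hs : s + 2 ≤ M) :
    d - 2 + d * s < d * M - 2 := by
  have h1 : d * (s + 1) ≤ d * (M - 1) := Nat.mul_le_mul_left d (by omega)
  have h2 : d * (s + 1) = d * s + d := by ring
  have h3 : d * (M - 1) + d = d * M := by
    have e : (M - 1) + 1 = M := by omega
    calc d * (M - 1) + d = d * ((M - 1) + 1) := by ring
      _ = d * M := by rw [e]
  have h4 : d ≤ d * (M - 1) := Nat.le_mul_of_pos_right d (by omega)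
  omega

lemma mul_pred (d m : ℕ) (hm : 1 ≤ m) : d * (m - 1) + d = d * m := by
  have e : (m - 1) + 1 = m := by omega
  calc d * (m - 1) + d = d * ((m - 1) + 1) := by ring
    _ = d * m := by rw [e]

/-- The Fine–Wilf style chain argument, specialized to words of length
`d * (k₁ + l₁) - 2` with periods `d * k₁` and `d * l₁`, `d ≥ 2`. -/
lemma fw_chain {A : Type*} (w : List A) (d k₁ l₁ : ℕ) (hd : 2 ≤ d)
    (hk₁ : 1 ≤ k₁) (hl₁ : 1 ≤ l₁)
    (hn : w.length = d * (k₁ + l₁) - 2)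
    (hpk : ListPeriod (d * k₁) w) (hpl : ListPeriod (d * l₁) w)
    (hco : Nat.Coprime k₁ (k₁ + l₁)) :
    w[d * k₁ - 2]? = w[d * l₁ - 2]? := by
  set M := k₁ + l₁ with hM
  have hM2 : 2 ≤ M := by omega
  -- the chain of positions
  set c : ℕ → ℕ := fun t => ((t + 1) * k₁ - 1) % M with hc
  have hclt : ∀ t, c t < M := fun t => Nat.mod_lt _ (by omega)
  have hmodeq : ∀ t v, c t = v → (t + 1) * k₁ ≡ v + 1 [MOD M] := by
    intro t v hv
    have hpos : 0 < (t + 1) * k₁ := Nat.mul_pos (t.succ_pos) hk₁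
    have h1 : (t + 1) * k₁ - 1 ≡ v [MOD M] := by
      rw [← hv]
      exact (Nat.mod_modEq ((t + 1) * k₁ - 1) M).symm
    have h2 : (t + 1) * k₁ - 1 + 1 = (t + 1) * k₁ := by omega
    have h3 := h1.add_right 1
    rwa [h2] at h3
  have hne1 : ∀ t, t < M - 2 → c t ≠ l₁ - 1 := by
    intro t ht hv
    have h := hmodeq t (l₁ - 1) hv
    have h' : (t + 1) * k₁ ≡ l₁ [MOD M] := by
      have e : l₁ - 1 + 1 = l₁ := by omega
      rwa [e] at h
    have h2 : (t + 2) * k₁ ≡ l₁ + k₁ [MOD M] := by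
      have e : (t + 2) * k₁ = (t + 1) * k₁ + k₁ := by ring
      rw [e]; exact h'.add_right k₁
    have h3 : (t + 2) * k₁ ≡ 0 [MOD M] := by
      have e : l₁ + k₁ ≡ 0 [MOD M] := by
        have e2 : l₁ + k₁ = M := by omega
        rw [e2]; exact (Nat.modEq_zero_iff_dvd).2 dvd_rfl
      exact h2.trans e
    have hdvd : M ∣ (t + 2) * k₁ := (Nat.modEq_zero_iff_dvd).1 h3
    have hdvd2 : M ∣ t + 2 := Nat.Coprime.dvd_of_dvd_mul_right hco.symm hdvd
    have := Nat.le_of_dvd (by omega) hdvd2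
    omega
  have hne2 : ∀ t, t ≤ M - 2 → c t ≠ M - 1 := by
    intro t ht hv
    have h := hmodeq t (M - 1) hv
    have h' : (t + 1) * k₁ ≡ 0 [MOD M] := by
      have e : M - 1 + 1 = M := by omega
      rw [e] at h
      exact h.trans ((Nat.modEq_zero_iff_dvd).2 dvd_rfl)
    have hdvd : M ∣ (t + 1) * k₁ := (Nat.modEq_zero_iff_dvd).1 h'
    have hdvd2 : M ∣ t + 1 := Nat.Coprime.dvd_of_dvd_mul_right hco.symm hdvd
    have := Nat.le_of_dvd (by omega) hdvd2
    omega
  have hstep : ∀ t, c (t + 1) = (c t + k₁) % M := by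
    intro t
    have hpos : 0 < (t + 1) * k₁ := Nat.mul_pos (t.succ_pos) hk₁
    have h2 : (t + 1 + 1) * k₁ - 1 = ((t + 1) * k₁ - 1) + k₁ := by
      have h4 : (t + 1 + 1) * k₁ = (t + 1) * k₁ + k₁ := by ring
      omega
    have h5 := (Nat.mod_modEq ((t + 1) * k₁ - 1) M).add_right k₁
    show ((t + 1 + 1) * k₁ - 1) % M = (((t + 1) * k₁ - 1) % M + k₁) % M
    rw [h2]
    exact h5.symm
  -- the main induction
  have key : ∀ t, t ≤ M - 2 → w[(d - 2) + d * c t]? = w[d * k₁ - 2]? := by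
    intro t
    induction t with
    | zero =>
      intro _
      have hc0 : c 0 = k₁ - 1 := by
        show (1 * k₁ - 1) % M = k₁ - 1
        rw [one_mul]; exact Nat.mod_eq_of_lt (by omega)
      rw [hc0]
      congr 1
      have e1 := mul_pred d k₁ hk₁
      have e2 : d ≤ d * k₁ := Nat.le_mul_of_pos_right d (by omega)
      omega
    | succ t ih =>
      intro ht
      have ih' := ih (by omega)
      have htlt : t < M - 2 := by omega
      have h1 := hne1 t htlt
      have h2 := hne2 t (by omega)
      have hlt := hclt t
      rw [hstep t]
      rcases lt_or_ge (c t) l₁ with hcase | hcase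
      · -- c t ≤ l₁ - 2, step +k₁
        have hct : c t + 2 ≤ l₁ := by omega
        have hmod : (c t + k₁) % M = c t + k₁ := Nat.mod_eq_of_lt (by omega)
        rw [hmod]
        have hb : ((d - 2) + d * c t) + d * k₁ < w.length := by
          rw [hn]
          have ha := aux_lt d M (c t + k₁) hd (by omega)
          have he : d * (c t + k₁) = d * c t + d * k₁ := Nat.mul_add d _ _
          omega
        have hper := hpk ((d - 2) + d * c t) hb
        have hidx : (d - 2) + d * (c t + k₁) = ((d - 2) + d * c t) + d * k₁ := by
          have he : d * (c t + k₁) = d * c t + d * k₁ := Nat.mul_add d _ _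
          omega
        rw [hidx, ← hper]
        exact ih'
      · -- l₁ ≤ c t ≤ M - 2, step -l₁
        have hct : c t ≤ M - 2 := by omega
        have hmod : (c t + k₁) % M = c t - l₁ := by
          have hge : M ≤ c t + k₁ := by omega
          rw [Nat.mod_eq_sub_mod hge, Nat.mod_eq_of_lt (by omega)]
          omega
        rw [hmod]
        have hidx : ((d - 2) + d * (c t - l₁)) + d * l₁ = (d - 2) + d * c t := by
          have he : d * (c t - l₁) + d * l₁ = d * c t := by
            rw [← Nat.mul_add]
            congr 1
            omega
          omega
        have hb : ((d - 2) + d * (c t - l₁)) + d * l₁ < w.length := by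
          rw [hidx, hn]
          have ha := aux_lt d M (c t) hd (by omega)
          omega
        have hper := hpl ((d - 2) + d * (c t - l₁)) hb
        rw [hidx] at hper
        rw [hper]
        exact ih'
  -- conclude at t = M - 2
  have hfin := key (M - 2) le_rfl
  have hcfin : c (M - 2) = l₁ - 1 := by
    show ((M - 2 + 1) * k₁ - 1) % M = l₁ - 1
    have hMe : M - 2 + 1 = M - 1 := by omega
    rw [hMe]
    have hpos : 0 < (M - 1) * k₁ := Nat.mul_pos (by omega) hk₁
    have e2 : (M - 1) * k₁ + k₁ = M * k₁ := by
      have e : (M - 1) + 1 = M := by omega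
      calc (M - 1) * k₁ + k₁ = ((M - 1) + 1) * k₁ := by ring
        _ = M * k₁ := by rw [e]
    have e1 : (M - 1) * k₁ - 1 + (k₁ + 1) = M * k₁ := by omega
    have e3 : (l₁ - 1) + (k₁ + 1) = M := by omega
    have hmm : M * k₁ ≡ 0 [MOD M] := (Nat.modEq_zero_iff_dvd).2 ⟨k₁, rfl⟩
    have hm0 : M ≡ 0 [MOD M] := (Nat.modEq_zero_iff_dvd).2 dvd_rfl
    have h4 : (M - 1) * k₁ - 1 + (k₁ + 1) ≡ (l₁ - 1) + (k₁ + 1) [MOD M] := by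
      rw [e1, e3]
      exact hmm.trans hm0.symm
    have h5 : (M - 1) * k₁ - 1 ≡ l₁ - 1 [MOD M] :=
      Nat.ModEq.add_right_cancel' (k₁ + 1) h4
    calc ((M - 1) * k₁ - 1) % M = (l₁ - 1) % M := h5
      _ = l₁ - 1 := Nat.mod_eq_of_lt (by omega)
  rw [hcfin] at hfin
  have hidx2 : (d - 2) + d * (l₁ - 1) = d * l₁ - 2 := by
    have e1 := mul_pred d l₁ hl₁
    have e2 : d ≤ d * l₁ := Nat.le_mul_of_pos_right d (by omega)
    omega
  rw [hidx2] at hfin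
  exact hfin.symm

theorem central_word_coprime_periods {A : Type*} (a b : A) (hab : a ≠ b)
    (w p q : List A) (hp : p.reverse = p) (hq : q.reverse = q)
    (h1 : w = p ++ [a, b] ++ q) (h2 : w = q ++ [b, a] ++ p) :
    Nat.Coprime (p.length + 2) (q.length + 2) ∧
    ListPeriod (p.length + 2) w ∧ ListPeriod (q.length + 2) w := by
  set k := p.length + 2 with hk
  set l := q.length + 2 with hl
  have hwlen : w.length = p.length + q.length + 2 := by
    rw [h1]
    simp only [List.length_append, List.length_cons, List.length_nil]
    omega
  -- period k
  have hpk : ListPeriod k w := by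
    intro i hi
    rw [hwlen] at hi
    have hiq : i < q.length := by omega
    have e1 : w[i]? = q[i]? := by
      rw [h2, List.getElem?_append_left
        (by simp only [List.length_append, List.length_cons, List.length_nil]; omega),
        List.getElem?_append_left hiq]
    have e2 : w[i + k]? = q[i]? := by
      rw [h1, List.getElem?_append_right
        (by simp only [List.length_append, List.length_cons, List.length_nil]; omega)]
      congr 1
      simp only [List.length_append, List.length_cons, List.length_nil]
      omega
    rw [e1, e2]
  -- period l
  have hpl : ListPeriod l w := by
    intro i hi
    rw [hwlen] at hi
    have hip : i < p.length := by omega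
    have e1 : w[i]? = p[i]? := by
      rw [h1, List.getElem?_append_left
        (by simp only [List.length_append, List.length_cons, List.length_nil]; omega),
        List.getElem?_append_left hip]
    have e2 : w[i + l]? = p[i]? := by
      rw [h2, List.getElem?_append_right
        (by simp only [List.length_append, List.length_cons, List.length_nil]; omega)]
      congr 1
      simp only [List.length_append, List.length_cons, List.length_nil]
      omega
    rw [e1, e2]
  -- the two distinguished letters
  have hwa : w[p.length]? = some a := by
    rw [h1, List.getElem?_append_left
      (by simp only [List.length_append, List.length_cons, List.length_nil]; omega),
      List.getElem?_append_right (Nat.le_refl _)]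
    simp
  have hwb : w[q.length]? = some b := by
    rw [h2, List.getElem?_append_left
      (by simp only [List.length_append, List.length_cons, List.length_nil]; omega),
      List.getElem?_append_right (Nat.le_refl _)]
    simp
  refine ⟨?_, hpk, hpl⟩
  by_contra hco
  set d := Nat.gcd k l with hd
  have hdpos : 0 < d := by
    rw [hd]
    exact Nat.gcd_pos_of_pos_left l (by omega)
  have hd2 : 2 ≤ d := by
    rcases Nat.lt_or_ge d 2 with h | h
    · exfalso
      have hg : Nat.gcd k l = 1 := by omega
      exact hco hg
    · exact h
  set k₁ := k / d with hk₁
  set l₁ := l / d with hl₁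
  have hkd : k = d * k₁ := by
    rw [hk₁, hd, Nat.mul_div_cancel' (Nat.gcd_dvd_left _ _)]
  have hld : l = d * l₁ := by
    rw [hl₁, hd, Nat.mul_div_cancel' (Nat.gcd_dvd_right _ _)]
  have hk₁pos : 1 ≤ k₁ := by
    rcases Nat.eq_zero_or_pos k₁ with h | h
    · rw [h, Nat.mul_zero] at hkd; omega
    · exact h
  have hl₁pos : 1 ≤ l₁ := by
    rcases Nat.eq_zero_or_pos l₁ with h | h
    · rw [h, Nat.mul_zero] at hld; omega
    · exact h
  have hco₁ : Nat.Coprime k₁ l₁ := by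
    rw [hk₁, hl₁, hd]
    exact Nat.coprime_div_gcd_div_gcd (hd ▸ hdpos)
  have hco₂ : Nat.Coprime k₁ (k₁ + l₁) := Nat.coprime_self_add_right.mpr hco₁
  have hlen : w.length = d * (k₁ + l₁) - 2 := by
    rw [hwlen, Nat.mul_add, ← hkd, ← hld]
    omega
  have hchain := fw_chain w d k₁ l₁ hd2 hk₁pos hl₁pos hlen
    (hkd ▸ hpk) (hld ▸ hpl) hco₂
  rw [← hkd, ← hld] at hchain
  have ek : k - 2 = p.length := by omega
  have el : l - 2 = q.length := by omega
  rw [ek, el, hwa, hwb] at hchain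
  exact hab (Option.some.inj hchain)
end

section
/- The iterated palindromic closure function Pal : {a,b}* → {a,b}*, defined by Pal(ε) = ε and Pal(vz) = (Pal(v)·z)^+ for z ∈ {a,b}, where u^+ denotes the shortest palindrome having u as a prefix, is injective. -/
/-- `w` is the (right) palindromic closure of `u`: the shortest palindrome with `u` as prefix. -/
def IsPalClosure {A : Type*} (u w : List A) : Prop :=
  w.reverse = w ∧ u <+: w ∧ ∀ w' : List A, w'.reverse = w' → u <+: w' → w.length ≤ w'.length

theorem iterated_palindromic_closure_injective {A : Type*} (a b : A) (hab : a ≠ b)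
    (Pal : List A → List A) (h0 : Pal [] = [])
    (hstep : ∀ v z, (z = a ∨ z = b) → IsPalClosure (Pal v ++ [z]) (Pal (v ++ [z]))) :
    ∀ v w : List A, (∀ c ∈ v, c = a ∨ c = b) → (∀ c ∈ w, c = a ∨ c = b) →
      Pal v = Pal w → v = w := by
  have hcase : ∀ l : List A, l = [] ∨ ∃ L x, l = L ++ [x] := by
    intro l
    rcases l.eq_nil_or_concat with h | ⟨L, x, h⟩
    · exact Or.inl h
    · exact Or.inr ⟨L, x, by simpa using h⟩
  have hpal : ∀ w : List A, (∀ c ∈ w, c = a ∨ c = b) → (Pal w).reverse = Pal w := by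
    intro w hw
    rcases hcase w with rfl | ⟨w₁, y, rfl⟩
    · simp [h0]
    · exact (hstep w₁ y (hw y (by simp))).1
  have main : ∀ (n : ℕ) (v w : List A), v.length + w.length ≤ n →
      (∀ c ∈ v, c = a ∨ c = b) → (∀ c ∈ w, c = a ∨ c = b) → Pal v = Pal w → v = w := by
    intro n
    induction n with
    | zero =>
      intro v w h _ _ _
      have hv : v.length = 0 := by omega
      have hw : w.length = 0 := by omega
      rw [List.length_eq_zero_iff.mp hv, List.length_eq_zero_iff.mp hw]
    | succ n ih =>
      intro v w hlen hv hw heq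
      rcases hcase v with rfl | ⟨v₁, z, rfl⟩
      · rcases hcase w with rfl | ⟨w₁, y, rfl⟩
        · rfl
        · exfalso
          have h1 := (hstep w₁ y (hw y (by simp))).2.1.length_le
          rw [← heq, h0] at h1
          simp at h1
      · rcases hcase w with rfl | ⟨w₁, y, rfl⟩
        · exfalso
          have h1 := (hstep v₁ z (hv z (by simp))).2.1.length_le
          rw [heq, h0] at h1
          simp at h1
        · have hv1 := hstep v₁ z (hv z (by simp))
          have hw1 := hstep w₁ y (hw y (by simp))
          have hvm : ∀ c ∈ v₁, c = a ∨ c = b := fun c hc => hv c (by simp [hc])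
          have hwm : ∀ c ∈ w₁, c = a ∨ c = b := fun c hc => hw c (by simp [hc])
          have hlv : (Pal v₁ ++ [z]).length ≤ (Pal (v₁ ++ [z])).length := hv1.2.1.length_le
          have hlw : (Pal w₁ ++ [y]).length ≤ (Pal (w₁ ++ [y])).length := hw1.2.1.length_le
          have hleneq : (Pal v₁).length = (Pal w₁).length := by
            rcases lt_trichotomy (Pal v₁).length (Pal w₁).length with h | h | h
            · exfalso
              have hp1 : Pal v₁ ++ [z] <+: Pal (w₁ ++ [y]) := heq ▸ hv1.2.1
              have hp2 : Pal w₁ <+: Pal (w₁ ++ [y]) :=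
                (List.prefix_append (Pal w₁) [y]).trans hw1.2.1
              have hpref : Pal v₁ ++ [z] <+: Pal w₁ :=
                List.prefix_of_prefix_length_le hp1 hp2 (by simp; omega)
              have hmin := hv1.2.2 (Pal w₁) (hpal w₁ hwm) hpref
              rw [heq] at hmin
              simp at hlw
              omega
            · exact h
            · exfalso
              have hp1 : Pal w₁ ++ [y] <+: Pal (v₁ ++ [z]) := heq ▸ hw1.2.1
              have hp2 : Pal v₁ <+: Pal (v₁ ++ [z]) :=
                (List.prefix_append (Pal v₁) [z]).trans hv1.2.1
              have hpref : Pal w₁ ++ [y] <+: Pal v₁ :=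
                List.prefix_of_prefix_length_le hp1 hp2 (by simp; omega)
              have hmin := hw1.2.2 (Pal v₁) (hpal v₁ hvm) hpref
              rw [← heq] at hmin
              simp at hlv
              omega
          have e1 : Pal v₁ ++ [z] <+: Pal (w₁ ++ [y]) := heq ▸ hv1.2.1
          have heq2 : Pal v₁ ++ [z] = Pal w₁ ++ [y] :=
            (List.prefix_of_prefix_length_le e1 hw1.2.1 (by simp [hleneq])).eq_of_length
              (by simp [hleneq])
          obtain ⟨hpe, hze⟩ := List.append_inj' heq2 rfl
          have hzy : z = y := by simpa using hze
          have hlen' : v₁.length + w₁.length ≤ n := by simp at hlen; omega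
          rw [ih v₁ w₁ hlen' hvm hwm hpe, hzy]
  intro v w hv hw heq
  exact main (v.length + w.length) v w le_rfl hv hw heq
end

section
/- Let β > 1, let a ∈ ℕ with b = a+1, and suppose x ∈ [0,1] has a T̄_β-orbit contained in an interval [t, t + 1/β] ⊆ [0,1] where the β̄-expansion of t starts with digit a. If r is the β̄-expansion of x, then every letter occurring in r belongs to {a, b}, and r is balanced. -/
open Classical in
/-- `⟨t⟩`: the fractional part of `t` unless `t` is an integer, in which case `1`. -/
noncomputable def angleFrac (t : ℝ) : ℝ := if ∃ n : ℤ, t = n then 1 else Int.fract t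

/-- The β̄-transformation `T̄_β(x) = ⟨βx⟩`. -/
noncomputable def TbarMap (β x : ℝ) : ℝ := angleFrac (β * x)

/-- The i-th digit (i ≥ 0) of the β̄-expansion of x: `x_{i+1} = ⌈β T̄_β^i(x)⌉ - 1`. -/
noncomputable def dbar (β x : ℝ) (i : ℕ) : ℤ := ⌈β * (TbarMap β)^[i] x⌉ - 1

lemma Tbar_eq (β y : ℝ) : TbarMap β y = β * y - ((⌈β * y⌉ : ℝ) - 1) := by
  unfold TbarMap angleFrac
  split
  · rename_i h
    obtain ⟨n, hn⟩ := h
    rw [hn, Int.ceil_intCast]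
    ring
  · rename_i h
    have h2 : ⌈β * y⌉ = ⌊β * y⌋ + 1 := by
      have hle := Int.ceil_le_floor_add_one (β * y)
      have h3 : (⌊β * y⌋ : ℝ) < β * y := by
        rcases lt_or_eq_of_le (Int.floor_le (β * y)) with h4 | h4
        · exact h4
        · exact absurd ⟨⌊β * y⌋, h4.symm⟩ h
      have h5 : (⌊β * y⌋ : ℤ) < ⌈β * y⌉ := Int.lt_ceil.2 h3
      omega
    rw [Int.fract, h2]
    push_cast
    ring

lemma dbar_succ (β y : ℝ) (k : ℕ) : dbar β y (k+1) = dbar β (TbarMap β y) k := by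
  unfold dbar
  rw [Function.iterate_succ_apply]

lemma dbar_add (β y : ℝ) (n m : ℕ) : dbar β y (n + m) = dbar β ((TbarMap β)^[n] y) m := by
  unfold dbar
  rw [add_comm, Function.iterate_add_apply]

lemma iter_mono (β : ℝ) (hβ : 0 < β) (y z : ℝ) (hyz : y ≤ z) :
    ∀ n, (∀ k < n, dbar β y k = dbar β z k) → (TbarMap β)^[n] y ≤ (TbarMap β)^[n] z := by
  intro n
  induction n with
  | zero => intro _; exact hyz
  | succ n ih =>
    intro h
    have h1 := ih (fun k hk => h k (by omega))
    have h2 : dbar β y n = dbar β z n := h n (by omega)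
    unfold dbar at h2
    rw [Function.iterate_succ_apply', Function.iterate_succ_apply', Tbar_eq, Tbar_eq]
    have h3 : (⌈β * (TbarMap β)^[n] y⌉ : ℝ) = (⌈β * (TbarMap β)^[n] z⌉ : ℝ) := by
      have : ⌈β * (TbarMap β)^[n] y⌉ = ⌈β * (TbarMap β)^[n] z⌉ := by omega
      exact_mod_cast this
    rw [h3]
    have := mul_le_mul_of_nonneg_left h1 hβ.le
    linarith

lemma dbar_mono (β : ℝ) (hβ : 0 < β) (y z : ℝ) (hyz : y ≤ z) (n : ℕ)
    (h : ∀ k < n, dbar β y k = dbar β z k) : dbar β y n ≤ dbar β z n := by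
  have h1 := iter_mono β hβ y z hyz n h
  unfold dbar
  have := Int.ceil_le_ceil (mul_le_mul_of_nonneg_left h1 hβ.le)
  omega

def Scnt (f : ℕ → ℤ) (a : ℤ) (i L : ℕ) : ℤ :=
  ∑ k ∈ Finset.range L, if f (i + k) = a + 1 then 1 else 0

lemma Scnt_zero (f : ℕ → ℤ) (a : ℤ) (i : ℕ) : Scnt f a i 0 = 0 := by simp [Scnt]

lemma Scnt_succ_back (f : ℕ → ℤ) (a : ℤ) (i L : ℕ) :
    Scnt f a i (L+1) = Scnt f a i L + (if f (i + L) = a + 1 then 1 else 0) := by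
  unfold Scnt
  rw [Finset.sum_range_succ]

lemma Scnt_split (f : ℕ → ℤ) (a : ℤ) (i L M : ℕ) :
    Scnt f a i (L + M) = Scnt f a i L + Scnt f a (i + L) M := by
  induction M with
  | zero => simp [Scnt_zero]
  | succ M ih =>
      rw [← add_assoc, Scnt_succ_back, ih, Scnt_succ_back]
      have h : i + (L + M) = i + L + M := by omega
      rw [h, add_assoc]

lemma Scnt_succ_front (f : ℕ → ℤ) (a : ℤ) (i L : ℕ) :
    Scnt f a i (L+1) = (if f i = a + 1 then 1 else 0) + Scnt f a (i+1) L := by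
  have h0 : L + 1 = 1 + L := by omega
  rw [h0, Scnt_split]
  have h1 : Scnt f a i 1 = (if f i = a + 1 then 1 else 0) := by
    rw [show (1:ℕ) = 0 + 1 from rfl, Scnt_succ_back, Scnt_zero]
    simp
  rw [h1]

lemma count_ofFn_eq (f : ℕ → ℤ) (a : ℤ) (i L : ℕ) :
    ((List.ofFn (fun k : Fin L => f (i + (k:ℕ)))).count (a+1) : ℤ) = Scnt f a i L := by
  induction L generalizing i with
  | zero => simp [Scnt_zero]
  | succ L ih =>
      rw [List.ofFn_succ, List.count_cons, Scnt_succ_front]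
      have h1 : (List.ofFn fun k : Fin L => f (i + ((k.succ : Fin (L+1)) : ℕ))) =
          (List.ofFn fun k : Fin L => f ((i+1) + (k:ℕ))) := by
        congr 1
        funext k
        congr 1
        simp [Fin.val_succ]
        omega
      rw [h1]
      push_cast
      rw [ih (i+1)]
      simp only [Fin.val_zero, add_zero]
      by_cases h : f i = a + 1 <;> simp [h] <;> ring

lemma extract (f : ℕ → ℤ) (a : ℤ) (hf : ∀ n, f n = a ∨ f n = a + 1) :
    ∀ L : ℕ, ∀ i j : ℕ, 2 ≤ Scnt f a i L - Scnt f a j L →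
    ∃ p q m, f p = a+1 ∧ f q = a ∧ (∀ k < m, f (p+1+k) = f (q+1+k)) ∧
      f (p+1+m) = a+1 ∧ f (q+1+m) = a := by
  have ha : ¬ ((a:ℤ) = a + 1) := by omega
  intro L
  induction L using Nat.strong_induction_on with
  | _ L IH =>
  intro i j h2
  match L with
  | 0 => rw [Scnt_zero, Scnt_zero] at h2; omega
  | 1 =>
      rw [show (1:ℕ) = 0 + 1 from rfl, Scnt_succ_back, Scnt_succ_back, Scnt_zero, Scnt_zero] at h2
      rcases hf (i+0) with h | h <;> rcases hf (j+0) with h' | h' <;>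
        simp [h, h', ha] at h2 <;> omega
  | (N+2) =>
  -- first letters
  by_cases hfront : f i = a + 1 ∧ f j = a
  case neg =>
    have h3 : 2 ≤ Scnt f a (i+1) (N+1) - Scnt f a (j+1) (N+1) := by
      rw [show (N+2:ℕ) = (N+1)+1 from rfl] at h2
      rw [Scnt_succ_front f a i (N+1), Scnt_succ_front f a j (N+1)] at h2
      rcases hf i with h | h <;> rcases hf j with h' | h'
      · simp [h, h', ha] at h2; omega
      · simp [h, h', ha] at h2; omega
      · exact absurd ⟨h, h'⟩ hfront
      · simp [h, h', ha] at h2; omega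
    exact IH (N+1) (by omega) (i+1) (j+1) h3
  obtain ⟨hfi, hfj⟩ := hfront
  -- last letters
  by_cases hback : f (i + (N+1)) = a + 1 ∧ f (j + (N+1)) = a
  case neg =>
    have h3 : 2 ≤ Scnt f a i (N+1) - Scnt f a j (N+1) := by
      rw [show (N+2:ℕ) = (N+1)+1 from rfl] at h2
      rw [Scnt_succ_back f a i (N+1), Scnt_succ_back f a j (N+1)] at h2
      rcases hf (i + (N+1)) with h | h <;> rcases hf (j + (N+1)) with h' | h'
      · simp [h, h', ha] at h2; omega
      · simp [h, h', ha] at h2; omega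
      · exact absurd ⟨h, h'⟩ hback
      · simp [h, h', ha] at h2; omega
    exact IH (N+1) (by omega) i j h3
  obtain ⟨hfi2, hfj2⟩ := hback
  -- interior
  by_cases hall : ∀ k < N, f (i+1+k) = f (j+1+k)
  case pos =>
    refine ⟨i, j, N, hfi, hfj, hall, ?_, ?_⟩
    · rw [show i+1+N = i + (N+1) by omega]; exact hfi2
    · rw [show j+1+N = j + (N+1) by omega]; exact hfj2
  case neg =>
  push_neg at hall
  have hex : ∃ k, k < N ∧ f (i+1+k) ≠ f (j+1+k) := hall
  classical
  let k₀ := Nat.find hex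
  have hk₀ : k₀ < N ∧ f (i+1+k₀) ≠ f (j+1+k₀) := Nat.find_spec hex
  have hmin : ∀ k < k₀, f (i+1+k) = f (j+1+k) := by
    intro k hk
    by_contra hne
    exact Nat.find_min hex hk ⟨by omega, hne⟩
  rcases hf (i+1+k₀) with h | h <;> rcases hf (j+1+k₀) with h' | h'
  · exact absurd (h.trans h'.symm) hk₀.2
  · -- f(i+1+k₀) = a : split and recurse on the tail
    have hC : Scnt f a (i+1) k₀ = Scnt f a (j+1) k₀ := by
      unfold Scnt
      apply Finset.sum_congr rfl
      intro k hk
      rw [hmin k (Finset.mem_range.1 hk)]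
    have hdecomp : ∀ n : ℕ, Scnt f a n (k₀+2) =
        (if f n = a+1 then (1:ℤ) else 0) + (Scnt f a (n+1) k₀ + (if f (n+1+k₀) = a+1 then (1:ℤ) else 0)) := by
      intro n
      rw [show (k₀+2) = (k₀+1)+1 from rfl, Scnt_succ_front, Scnt_succ_back]
    have hsi : Scnt f a i (k₀+2) = Scnt f a j (k₀+2) := by
      rw [hdecomp i, hdecomp j, hC, hfi, hfj, h, h']
      simp [ha]
      ring
    have hsplitL : (N+2 : ℕ) = (k₀+2) + (N - k₀) := by omega
    rw [hsplitL, Scnt_split f a i (k₀+2) (N-k₀), Scnt_split f a j (k₀+2) (N-k₀), hsi] at h2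
    have h3 : 2 ≤ Scnt f a (i + (k₀+2)) (N-k₀) - Scnt f a (j + (k₀+2)) (N-k₀) := by omega
    exact IH (N - k₀) (by omega) _ _ h3
  · -- f(i+1+k₀) = a+1, f(j+1+k₀) = a : direct pattern
    exact ⟨i, j, k₀, hfi, hfj, hmin, h, h'⟩
  · exact absurd (h.trans h'.symm) hk₀.2

lemma no_pattern (β : ℝ) (hβ : 1 < β) (a : ℤ) (t x : ℝ)
    (hceil : ⌈β * t⌉ = a + 1)
    (horb : ∀ n : ℕ, (TbarMap β)^[n] x ∈ Set.Icc t (t + 1 / β))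
    (p q m : ℕ)
    (hp : dbar β x p = a+1) (hq : dbar β x q = a)
    (hw : ∀ k < m, dbar β x (p+1+k) = dbar β x (q+1+k))
    (hpm : dbar β x (p+1+m) = a+1) (hqm : dbar β x (q+1+m) = a) : False := by
  have hβ0 : (0:ℝ) < β := lt_trans zero_lt_one hβ
  have hβinv : β * (1/β) = 1 := by field_simp
  have hb1 : β * (t + 1/β) = β * t + 1 := by rw [mul_add, hβinv]
  have hta : dbar β t 0 = a := by
    unfold dbar
    rw [Function.iterate_zero_apply, hceil]
    omega
  have hd0t1 : dbar β (t + 1/β) 0 = a + 1 := by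
    unfold dbar
    rw [Function.iterate_zero_apply, hb1]
    rw [show β * t + 1 = β * t + (1:ℤ) by push_cast; ring, Int.ceil_add_intCast, hceil]
    omega
  have htail : TbarMap β (t + 1/β) = TbarMap β t := by
    rw [Tbar_eq, Tbar_eq, hb1]
    rw [show β * t + 1 = β * t + (1:ℤ) by push_cast; ring, Int.ceil_add_intCast]
    push_cast
    ring
  have hdt1 : ∀ k : ℕ, dbar β (t + 1/β) (k+1) = dbar β t (k+1) := by
    intro k
    rw [dbar_succ, dbar_succ, htail]
  have hdxp : ∀ k : ℕ, dbar β ((TbarMap β)^[p] x) k = dbar β x (p + k) :=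
    fun k => (dbar_add β x p k).symm
  have hdxq : ∀ k : ℕ, dbar β ((TbarMap β)^[q] x) k = dbar β x (q + k) :=
    fun k => (dbar_add β x q k).symm
  have hy1 : (TbarMap β)^[p] x ≤ t + 1/β := (horb p).2
  have hz0 : t ≤ (TbarMap β)^[q] x := (horb q).1
  by_cases hall : ∀ k < m, dbar β x (p+1+k) = dbar β t (k+1)
  · -- the whole middle agrees with the expansion of t
    have key1 : dbar β ((TbarMap β)^[p] x) (m+1) ≤ dbar β (t + 1/β) (m+1) := by
      apply dbar_mono β hβ0 _ _ hy1
      intro k hk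
      match k with
      | 0 => rw [hdxp 0, add_zero, hp, hd0t1]
      | (l+1) =>
          rw [hdxp (l+1), show p + (l+1) = p+1+l by omega, hall l (by omega), hdt1 l]
    have key2 : dbar β t (m+1) ≤ dbar β ((TbarMap β)^[q] x) (m+1) := by
      apply dbar_mono β hβ0 _ _ hz0
      intro k hk
      match k with
      | 0 => rw [hdxq 0, add_zero, hq, hta]
      | (l+1) =>
          rw [hdxq (l+1), show q + (l+1) = q+1+l by omega, ← hw l (by omega),
            hall l (by omega)]
    rw [hdxp (m+1), show p + (m+1) = p+1+m by omega, hpm, hdt1 m] at key1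
    rw [hdxq (m+1), show q + (m+1) = q+1+m by omega, hqm] at key2
    omega
  · -- first disagreement with the expansion of t
    push_neg at hall
    have hex : ∃ k, k < m ∧ dbar β x (p+1+k) ≠ dbar β t (k+1) := hall
    classical
    let k₀ := Nat.find hex
    have hk₀ : k₀ < m ∧ dbar β x (p+1+k₀) ≠ dbar β t (k₀+1) := Nat.find_spec hex
    have hmin : ∀ k < k₀, dbar β x (p+1+k) = dbar β t (k+1) := by
      intro k hk
      by_contra hne
      exact Nat.find_min hex hk ⟨by omega, hne⟩
    have key1 : dbar β ((TbarMap β)^[p] x) (k₀+1) ≤ dbar β (t + 1/β) (k₀+1) := by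
      apply dbar_mono β hβ0 _ _ hy1
      intro k hk
      match k with
      | 0 => rw [hdxp 0, add_zero, hp, hd0t1]
      | (l+1) =>
          rw [hdxp (l+1), show p + (l+1) = p+1+l by omega, hmin l (by omega), hdt1 l]
    have key2 : dbar β t (k₀+1) ≤ dbar β ((TbarMap β)^[q] x) (k₀+1) := by
      apply dbar_mono β hβ0 _ _ hz0
      intro k hk
      match k with
      | 0 => rw [hdxq 0, add_zero, hq, hta]
      | (l+1) =>
          rw [hdxq (l+1), show q + (l+1) = q+1+l by omega, ← hw l (by omega),
            hmin l (by omega)]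
    rw [hdxp (k₀+1), show p + (k₀+1) = p+1+k₀ by omega, hdt1 k₀] at key1
    rw [hdxq (k₀+1), show q + (k₀+1) = q+1+k₀ by omega, ← hw k₀ hk₀.1] at key2
    exact hk₀.2 (le_antisymm key1 key2)

theorem orbit_in_small_interval_balanced (β : ℝ) (hβ : 1 < β) (a : ℕ) (t x : ℝ)
    (ht0 : 0 ≤ t) (ht1 : t + 1 / β ≤ 1)
    (horb : ∀ n : ℕ, (TbarMap β)^[n] x ∈ Set.Icc t (t + 1 / β))
    (hta : dbar β t 0 = (a : ℤ)) :
    (∀ n : ℕ, dbar β x n = (a : ℤ) ∨ dbar β x n = (a : ℤ) + 1) ∧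
    (∀ u v : List ℤ, InfFactor u (dbar β x) → InfFactor v (dbar β x) →
      u.length = v.length →
      |(u.count ((a : ℤ) + 1) : ℤ) - (v.count ((a : ℤ) + 1) : ℤ)| ≤ 1) := by
  have hβ0 : (0:ℝ) < β := lt_trans zero_lt_one hβ
  have hceil : ⌈β * t⌉ = (a:ℤ) + 1 := by
    unfold dbar at hta
    rw [Function.iterate_zero_apply] at hta
    omega
  have hbt1 : β * t ≤ (a:ℝ) + 1 := by
    have h := Int.ceil_le.1 (le_of_eq hceil)
    push_cast at h
    exact h
  have hbt0 : (a:ℝ) < β * t := by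
    have h : ((a:ℤ)) < ⌈β * t⌉ := by omega
    have := Int.lt_ceil.1 h
    push_cast at this
    exact this
  have hβinv : β * (1/β) = 1 := by field_simp
  have part1 : ∀ n : ℕ, dbar β x n = (a : ℤ) ∨ dbar β x n = (a : ℤ) + 1 := by
    intro n
    obtain ⟨hl, hr⟩ := horb n
    have h1 : (a:ℝ) < β * (TbarMap β)^[n] x :=
      lt_of_lt_of_le hbt0 (mul_le_mul_of_nonneg_left hl hβ0.le)
    have h2 : β * (TbarMap β)^[n] x ≤ (a:ℝ) + 2 := by
      have := mul_le_mul_of_nonneg_left hr hβ0.le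
      rw [mul_add, hβinv] at this
      linarith
    have hc1 : (a:ℤ) < ⌈β * (TbarMap β)^[n] x⌉ := Int.lt_ceil.2 (by exact_mod_cast h1)
    have hc2 : ⌈β * (TbarMap β)^[n] x⌉ ≤ (a:ℤ) + 2 := Int.ceil_le.2 (by push_cast; exact h2)
    unfold dbar
    omega
  refine ⟨part1, ?_⟩
  intro u v hu hv hlen
  by_contra hcon
  push_neg at hcon
  obtain ⟨iu, hu⟩ := hu
  obtain ⟨iv, hv⟩ := hv
  have hcu : ((u.count ((a:ℤ)+1)) : ℤ) = Scnt (dbar β x) a iu u.length := by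
    conv_lhs => rw [hu]
    exact count_ofFn_eq (dbar β x) (a:ℤ) iu u.length
  have hcv : ((v.count ((a:ℤ)+1)) : ℤ) = Scnt (dbar β x) a iv u.length := by
    conv_lhs => rw [hv]
    rw [count_ofFn_eq (dbar β x) (a:ℤ) iv v.length, hlen]
  rw [hcu, hcv] at hcon
  have hpat : ∃ p q m, dbar β x p = (a:ℤ)+1 ∧ dbar β x q = (a:ℤ) ∧
      (∀ k < m, dbar β x (p+1+k) = dbar β x (q+1+k)) ∧
      dbar β x (p+1+m) = (a:ℤ)+1 ∧ dbar β x (q+1+m) = (a:ℤ) := by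
    rcases abs_cases (Scnt (dbar β x) a iu u.length - Scnt (dbar β x) a iv u.length) with
      ⟨he, _⟩ | ⟨he, _⟩
    · exact extract (dbar β x) (a:ℤ) part1 u.length iu iv (by omega)
    · exact extract (dbar β x) (a:ℤ) part1 u.length iv iu (by omega)
  obtain ⟨p, q, m, hp, hq, hw, hpm, hqm⟩ := hpat
  exact absurd (no_pattern β hβ (a:ℤ) t x hceil horb p q m hp hq hw hpm hqm) not_false
end

section
/- Suppose the β-expansion of 1 is finite, d_β(1) = ε_1⋯ε_m with ε_m ≠ 0. Then the β̄-expansion of 1 is the purely periodic word (ε_1⋯ε_{m−1}(ε_m − 1))^ω. -/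
/-- The β-transformation `T_β(x) = βx mod 1`. -/
noncomputable def betaT (β x : ℝ) : ℝ := Int.fract (β * x)

/-- The i-th digit (i ≥ 0) of the β-expansion of x: `x_{i+1} = ⌊β T_β^i(x)⌋`. -/
noncomputable def betaDigit (β x : ℝ) (i : ℕ) : ℤ := ⌊β * (betaT β)^[i] x⌋

theorem dbar_one_of_finite_expansion (β : ℝ) (hβ : 1 < β) (m : ℕ) (hm : 1 ≤ m)
    (hfin : (betaT β)^[m] 1 = 0) (hnz : betaDigit β 1 (m - 1) ≠ 0) :
    ∀ i : ℕ, dbar β 1 i =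
      if i % m = m - 1 then betaDigit β 1 (m - 1) - 1 else betaDigit β 1 (i % m) := by
  intro i
  have htsucc : ∀ j : ℕ, (betaT β)^[j+1] 1 = Int.fract (β * (betaT β)^[j] 1) := by
    intro j
    rw [Function.iterate_succ_apply']
    rfl
  -- once the T-orbit hits 0 it stays at 0
  have hzero : ∀ j k : ℕ, (betaT β)^[j] 1 = 0 → (betaT β)^[j+k] 1 = 0 := by
    intro j k h
    induction k with
    | zero => simpa using h
    | succ k ih =>
      have hjk : j + (k+1) = (j+k) + 1 := by omega
      rw [hjk, htsucc, ih, mul_zero, Int.fract_zero]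
  have htm1 : (betaT β)^[m-1] 1 ≠ 0 := by
    intro h
    apply hnz
    simp [betaDigit, h]
  have hne : ∀ j, 1 ≤ j → j ≤ m - 1 → (betaT β)^[j] 1 ≠ 0 := by
    intro j _ hj2 h
    apply htm1
    have hmj : m - 1 = j + (m - 1 - j) := by omega
    rw [hmj]
    exact hzero j _ h
  -- the T̄-orbit agrees with the T-orbit up to step m-1
  have hbar : ∀ j, j ≤ m - 1 → (TbarMap β)^[j] 1 = (betaT β)^[j] 1 := by
    intro j hj
    induction j with
    | zero => simp
    | succ k ih =>
      have hk : k ≤ m - 1 := by omega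
      rw [Function.iterate_succ_apply', ih hk]
      show angleFrac (β * (betaT β)^[k] 1) = _
      rw [angleFrac, if_neg, ← htsucc]
      rintro ⟨n, hn⟩
      apply hne (k+1) (by omega) hj
      rw [htsucc, hn, Int.fract_intCast]
  -- the T̄-orbit returns to 1 at step m
  have hsm : (TbarMap β)^[m] 1 = 1 := by
    have h1 : m = (m-1) + 1 := by omega
    rw [h1, Function.iterate_succ_apply', hbar (m-1) le_rfl]
    show angleFrac (β * (betaT β)^[m-1] 1) = 1
    rw [angleFrac, if_pos]
    refine ⟨⌊β * (betaT β)^[m-1] 1⌋, ?_⟩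
    have h2 : Int.fract (β * (betaT β)^[m-1] 1) = 0 := by
      rw [← htsucc, ← h1]; exact hfin
    have h3 := Int.self_sub_floor (β * (betaT β)^[m-1] 1)
    linarith [h2, h3.symm ▸ h2]
  -- periodicity of the T̄-orbit
  have hper : (TbarMap β)^[i] 1 = (TbarMap β)^[i % m] 1 := by
    conv_lhs => rw [← Nat.div_add_mod i m]
    generalize i / m = q
    induction q with
    | zero => simp
    | succ q ih =>
      have h4 : m * (q+1) + i % m = (m * q + i % m) + m := by ring
      rw [h4, Function.iterate_add_apply, hsm]
      exact ih
  have hrm : i % m < m := Nat.mod_lt _ (by omega)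
  simp only [dbar, betaDigit, hper]
  by_cases hcase : i % m = m - 1
  · rw [if_pos hcase, hcase, hbar (m-1) le_rfl]
    set x := β * (betaT β)^[m-1] 1 with hxdef
    have hfr : Int.fract x = 0 := by
      rw [hxdef, ← htsucc]
      have h5 : m - 1 + 1 = m := by omega
      rw [h5]; exact hfin
    have h6 := Int.self_sub_floor x
    have hx : x = (⌊x⌋ : ℝ) := by
      have : x - ⌊x⌋ = 0 := by rw [h6, hfr]
      linarith
    rw [hx, Int.ceil_intCast, Int.floor_intCast]
  · rw [if_neg hcase, hbar _ (by omega)]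
    set x := β * (betaT β)^[i % m] 1 with hxdef
    have hfr : Int.fract x ≠ 0 := by
      intro h
      apply hne (i % m + 1) (by omega) (by omega)
      rw [htsucc, ← hxdef, h]
    have hpos : 0 < Int.fract x := lt_of_le_of_ne (Int.fract_nonneg x) (Ne.symm hfr)
    have h6 := Int.self_sub_floor x
    have h1 : (⌊x⌋ : ℝ) < x := by
      have : x - ⌊x⌋ = Int.fract x := h6
      linarith
    have h2 : x ≤ (⌊x⌋ : ℝ) + 1 := le_of_lt (Int.lt_floor_add_one x)
    have hceil : ⌈x⌉ = ⌊x⌋ + 1 := by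
      rw [Int.ceil_eq_iff]
      constructor <;> push_cast <;> linarith
    omega
end
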